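/- Let m ≥ 1, r ≥ 1, and let k : Fin m → ℕ be odd integers with 2r+1 ≤ k(i) for all i. In the m-dimensional r-nearest neighbor torus (the m-fold box product of the cycles C_{k(i)}^r), λ_{1,0,…,0} = 2r + 1 − sin((2r+1)π/k(1))/sin(π/k(1)) is an eigenvalue of the Laplacian matrix (with eigenvector v(x) = exp(2πi·x(1)/k(1))), λ_{(k(1)−1)/2,…,(k(m)−1)/2} = (2r+1)m − ∑_{i=1}^{m} sin((2r+1)π(k(i)−1)/(2k(i)))/sin(π(k(i)−1)/(2k(i))) is an eigenvalue (with eigenvector v(x) = exp(2πi·∑_i ((k(i)−1)/2)·x(i)/k(i))), and their quotient equals (2r + 1 − sin((2r+1)π/k(1))/sin(π/k(1))) / ((2r+1)m − ∑_{i=1}^{m} sin((2r+1)π(k(i)−1)/(2k(i)))/sin(π(k(i)−1)/(2k(i)))). -/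

import Mathlib

/-!
Characters of the torus are eigenvectors of its Laplacian. On `C_n^r` the Laplacian sends an
additive character `ψ` of `ZMod n` to `(∑_{s=1}^r (2 - ψ s - ψ (-s))) • ψ`; a product of
eigenvectors of the factor cycles is an eigenvector of the torus whose eigenvalue is the sum of
the factor eigenvalues. For `ψ a = exp (2πiθa/n)` the cycle eigenvalue is
`∑_{s=1}^r (2 - 2 cos (2sβ))` with `β = πθ/n`, and multiplying by `sin β` makes it telescope
(Dirichlet kernel) to `2r + 1 - sin ((2r+1)β) / sin β`. The two eigenvectors of the theorem are
the characters with `θ = (1, 0, …, 0)` and `θ = ((k i - 1)/2)ᵢ`.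
-/

open Real Complex SimpleGraph Matrix Finset

/-- The `r`-nearest neighbor cycle `C_n^r` on `ZMod n`: distinct vertices `a, b` are adjacent
iff `a - b ≡ s (mod n)` for some `s ∈ {1,…,r} ∪ {n-r,…,n-1}`, i.e. iff `a - b = s` or
`b - a = s` in `ZMod n` for some `1 ≤ s ≤ r`. -/
def nnCycle (n r : ℕ) : SimpleGraph (ZMod n) where
  Adj a b := a ≠ b ∧ ∃ s ∈ Finset.Icc 1 r, a - b = (s : ZMod n) ∨ b - a = (s : ZMod n)
  symm := ⟨by
    rintro a b ⟨hne, s, hs, h⟩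
    exact ⟨hne.symm, s, hs, h.symm⟩⟩
  loopless := ⟨by rintro a ⟨h, -⟩; exact h rfl⟩

instance nnCycle.adjDecidable (n r : ℕ) : DecidableRel (nnCycle n r).Adj := fun a b =>
  inferInstanceAs (Decidable (a ≠ b ∧ ∃ s ∈ Finset.Icc 1 r,
    a - b = (s : ZMod n) ∨ b - a = (s : ZMod n)))

/-- The `m`-dimensional `r`-nearest neighbor torus: the `m`-fold Cartesian (box) product of
the cycles `C_{k i}^r`. Two tuples are adjacent iff they agree in all but one coordinate and
differ in that coordinate by an edge of the corresponding cycle. -/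
def nnTorus (m r : ℕ) (k : Fin m → ℕ) : SimpleGraph ((i : Fin m) → ZMod (k i)) where
  Adj x y := ∃ i, (∀ l, l ≠ i → x l = y l) ∧ (nnCycle (k i) r).Adj (x i) (y i)
  symm := ⟨by
    rintro x y ⟨i, h1, h2⟩
    exact ⟨i, fun l hl => (h1 l hl).symm, (nnCycle (k i) r).symm.symm _ _ h2⟩⟩
  loopless := ⟨by
    rintro x ⟨i, -, h2⟩
    exact (nnCycle (k i) r).loopless.irrefl _ h2⟩

instance nnTorus.adjDecidable (m r : ℕ) (k : Fin m → ℕ) :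
    DecidableRel (nnTorus m r k).Adj := fun x y =>
  inferInstanceAs (Decidable (∃ i, (∀ l, l ≠ i → x l = y l) ∧
    (nnCycle (k i) r).Adj (x i) (y i)))

theorem SimpleGraph.lapMatrix_mulVec_apply_eq_sum_sub {V R : Type*} [Fintype V] [DecidableEq V]
    [NonAssocRing R] (G : SimpleGraph V) [DecidableRel G.Adj] (f : V → R) (x : V) :
    (G.lapMatrix R *ᵥ f) x = ∑ y ∈ G.neighborFinset x, (f x - f y) := by
  rw [lapMatrix_mulVec_apply, sum_sub_distrib, sum_const, card_neighborFinset_eq_degree,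
    nsmul_eq_mul]

section Cycle

variable {n r : ℕ}

theorem ZMod.natCast_ne_zero_of_pos_of_lt {s : ℕ} (h0 : 0 < s) (hs : s < n) : (s : ZMod n) ≠ 0 := by
  rw [Ne, ZMod.natCast_eq_zero_iff]
  exact Nat.not_dvd_of_pos_of_lt h0 hs

theorem nnCycle_neighborFinset [NeZero n] (hn : 2 * r + 1 ≤ n) (b : ZMod n) :
    (nnCycle n r).neighborFinset b =
      (Icc 1 r).image (fun s : ℕ => b + s) ∪ (Icc 1 r).image (fun s : ℕ => b - s) := by
  ext a
  rw [mem_neighborFinset, mem_union, mem_image, mem_image]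
  simp only [nnCycle]
  constructor
  · rintro ⟨-, s, hs, h | h⟩
    · exact Or.inr ⟨s, hs, by rw [← h]; ring⟩
    · exact Or.inl ⟨s, hs, by rw [← h]; ring⟩
  · have hs0 : ∀ s ∈ Icc 1 r, (s : ZMod n) ≠ 0 := fun s hs => by
      rw [mem_Icc] at hs
      exact ZMod.natCast_ne_zero_of_pos_of_lt hs.1 (by omega)
    rintro (⟨s, hs, rfl⟩ | ⟨s, hs, rfl⟩)
    · exact ⟨by simpa using hs0 s hs, s, hs, Or.inr (by ring)⟩
    · exact ⟨by simpa [eq_sub_iff_add_eq] using hs0 s hs, s, hs, Or.inl (by ring)⟩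

theorem nnCycle_sum_neighborFinset {M : Type*} [AddCommMonoid M] [NeZero n]
    (hn : 2 * r + 1 ≤ n) (f : ZMod n → M) (b : ZMod n) :
    ∑ a ∈ (nnCycle n r).neighborFinset b, f a = ∑ s ∈ Icc 1 r, (f (b + s) + f (b - s)) := by
  have hcast : Set.InjOn (fun s : ℕ => (s : ZMod n)) (Icc 1 r) := fun s hs t ht h => by
    simp only [coe_Icc, Set.mem_Icc] at hs ht
    rwa [ZMod.natCast_eq_natCast_iff', Nat.mod_eq_of_lt (by omega),
      Nat.mod_eq_of_lt (by omega)] at h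
  have hdisj : Disjoint ((Icc 1 r).image (fun s : ℕ => b + s))
      ((Icc 1 r).image (fun s : ℕ => b - s)) := by
    simp only [Finset.disjoint_left, mem_image, mem_Icc, not_exists, not_and]
    rintro _ ⟨s, hs, rfl⟩ t ht h
    have : ((s + t : ℕ) : ZMod n) = 0 := by push_cast; linear_combination -h
    exact ZMod.natCast_ne_zero_of_pos_of_lt (by omega) (by omega) this
  rw [nnCycle_neighborFinset hn, sum_union hdisj, sum_add_distrib,
    sum_image fun s hs t ht h => hcast hs ht (add_left_cancel h),
    sum_image fun s hs t ht h => hcast hs ht (sub_right_injective h)]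

theorem nnCycle_lapMatrix_mulVec_addChar [NeZero n] (hn : 2 * r + 1 ≤ n)
    (ψ : AddChar (ZMod n) ℂ) :
    (nnCycle n r).lapMatrix ℂ *ᵥ ψ = (∑ s ∈ Icc 1 r, (2 - ψ s - ψ (-s))) • ⇑ψ := by
  funext b
  rw [SimpleGraph.lapMatrix_mulVec_apply_eq_sum_sub, nnCycle_sum_neighborFinset hn,
    Pi.smul_apply, smul_eq_mul, sum_mul]
  refine sum_congr rfl fun s _ => ?_
  rw [sub_eq_add_neg b, AddChar.map_add_eq_mul, AddChar.map_add_eq_mul]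
  ring

theorem two_sub_stdAddChar_mulShift [NeZero n] (θ s : ℕ) :
    2 - (ZMod.stdAddChar.mulShift θ) (s : ZMod n) - (ZMod.stdAddChar.mulShift θ) (-s : ZMod n) =
      ((2 - 2 * Real.cos (2 * π * θ * s / n) : ℝ) : ℂ) := by
  have harg : (2 * π * I * ((θ * s : ℕ) : ℤ) / n : ℂ) = ((2 * π * θ * s / n : ℝ) : ℂ) * I := by
    push_cast; ring
  have hneg : (2 * π * I * (-((θ * s : ℕ) : ℤ) : ℤ) / n : ℂ) =
      -((2 * π * θ * s / n : ℝ) : ℂ) * I := by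
    push_cast; ring
  rw [AddChar.mulShift_apply, AddChar.mulShift_apply, mul_neg,
    show (θ : ZMod n) * s = (((θ * s : ℕ) : ℤ) : ZMod n) by push_cast; rfl,
    ← Int.cast_neg, ZMod.stdAddChar_coe, ZMod.stdAddChar_coe, harg, hneg,
    sub_sub, ← two_cos]
  push_cast
  ring

end Cycle

theorem sum_Icc_two_sub_two_cos_mul_sin (r : ℕ) (β : ℝ) :
    (∑ s ∈ Icc 1 r, (2 - 2 * Real.cos (2 * s * β))) * Real.sin β =
      (2 * r + 1) * Real.sin β - Real.sin ((2 * r + 1) * β) := by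
  induction r with
  | zero => simp
  | succ r ih =>
    have htel := Real.two_mul_sin_mul_cos β (2 * (r + 1) * β)
    rw [sum_Icc_succ_top (by omega), add_mul, ih]
    rw [show β - 2 * (r + 1) * β = -((2 * r + 1) * β) by ring, Real.sin_neg,
      show β + 2 * (r + 1) * β = (2 * (r + 1) + 1) * β by ring] at htel
    push_cast
    linear_combination -htel

theorem sum_Icc_two_sub_two_cos (r : ℕ) {β : ℝ} (hβ : Real.sin β ≠ 0) :
    ∑ s ∈ Icc 1 r, (2 - 2 * Real.cos (2 * s * β)) =
      2 * r + 1 - Real.sin ((2 * r + 1) * β) / Real.sin β := by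
  rw [eq_sub_iff_add_eq, ← eq_sub_iff_add_eq', div_eq_iff hβ, sub_mul,
    sum_Icc_two_sub_two_cos_mul_sin]
  ring

theorem sum_Icc_two_sub_two_cos_of_eq (r θ n : ℕ) {β : ℝ} (hβ : π * θ / n = β)
    (hsin : Real.sin β ≠ 0) :
    ∑ s ∈ Icc 1 r, (2 - 2 * Real.cos (2 * π * θ * s / n)) =
      2 * r + 1 - Real.sin ((2 * r + 1) * β) / Real.sin β := by
  rw [← sum_Icc_two_sub_two_cos r hsin, ← hβ]
  exact sum_congr rfl fun s _ => by ring_nf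

section Torus

variable {m r : ℕ} {k : Fin m → ℕ}

theorem prod_update_eq_mul_prod_erase {M : Type*} [CommMonoid M]
    (v : (i : Fin m) → ZMod (k i) → M) (x : (i : Fin m) → ZMod (k i)) (i : Fin m)
    (a : ZMod (k i)) :
    ∏ j, v j (Function.update x i a j) = v i a * ∏ j ∈ univ.erase i, v j (x j) := by
  rw [← mul_prod_erase univ _ (mem_univ i), Function.update_self]
  congr 1
  exact prod_congr rfl fun j hj => by rw [Function.update_of_ne (ne_of_mem_erase hj)]

variable [∀ i, NeZero (k i)]

theorem nnTorus_sum_neighborFinset {M : Type*} [AddCommMonoid M]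
    (f : ((i : Fin m) → ZMod (k i)) → M) (x : (i : Fin m) → ZMod (k i)) :
    ∑ y ∈ (nnTorus m r k).neighborFinset x, f y =
      ∑ i, ∑ a ∈ (nnCycle (k i) r).neighborFinset (x i), f (Function.update x i a) := by
  rw [← sum_sigma univ (fun i => (nnCycle (k i) r).neighborFinset (x i))
    (fun p => f (Function.update x p.1 p.2))]
  symm
  refine sum_bij (fun p _ => Function.update x p.1 p.2) ?_ ?_ ?_ fun _ _ => rfl
  · rintro ⟨i, a⟩ ha
    rw [mem_sigma, mem_neighborFinset] at ha
    rw [mem_neighborFinset]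
    refine ⟨i, fun l hl => (Function.update_of_ne hl _ _).symm, ?_⟩
    rw [Function.update_self]
    exact ha.2
  · rintro ⟨i, a⟩ ha ⟨j, b⟩ hb h
    rw [mem_sigma, mem_neighborFinset] at ha hb
    obtain rfl : i = j := by
      by_contra hij
      have := congrFun h i
      rw [Function.update_self, Function.update_of_ne hij] at this
      exact ha.2.ne' this
    rw [Function.update_injective x i (a₁ := a) (a₂ := b) h]
  · intro y hy
    rw [mem_neighborFinset] at hy
    obtain ⟨i, hagree, hadj⟩ := hy
    refine ⟨⟨i, y i⟩, mem_sigma.2 ⟨mem_univ i, (mem_neighborFinset _ _ _).2 hadj⟩, ?_⟩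
    funext l
    by_cases hl : l = i
    · subst hl; rw [Function.update_self]
    · rw [Function.update_of_ne hl, hagree l hl]

theorem nnTorus_lapMatrix_mulVec_prod (v : (i : Fin m) → ZMod (k i) → ℂ) (μ : Fin m → ℂ)
    (hv : ∀ i, (nnCycle (k i) r).lapMatrix ℂ *ᵥ v i = μ i • v i) :
    (nnTorus m r k).lapMatrix ℂ *ᵥ (fun x => ∏ i, v i (x i)) =
      (∑ i, μ i) • fun x => ∏ i, v i (x i) := by
  funext x
  have hx : ∀ i, ∏ j, v j (x j) = v i (x i) * ∏ j ∈ univ.erase i, v j (x j) := fun i => by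
    simpa using prod_update_eq_mul_prod_erase v x i (x i)
  rw [SimpleGraph.lapMatrix_mulVec_apply_eq_sum_sub, nnTorus_sum_neighborFinset,
    Pi.smul_apply, smul_eq_mul, sum_mul]
  refine sum_congr rfl fun i _ => ?_
  have hvi := congrFun (hv i) (x i)
  rw [SimpleGraph.lapMatrix_mulVec_apply_eq_sum_sub, Pi.smul_apply, smul_eq_mul] at hvi
  simp only [prod_update_eq_mul_prod_erase v x i, hx i, ← sub_mul, ← sum_mul, hvi]
  ring

theorem nnTorus_lapMatrix_mulVec_exp_sum (hk : ∀ i, 2 * r + 1 ≤ k i) (θ : Fin m → ℕ) :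
    (nnTorus m r k).lapMatrix ℂ *ᵥ
        (fun x => Complex.exp (2 * π * I * ∑ i, (θ i : ℂ) * ((x i).val : ℂ) / (k i : ℂ))) =
      ((∑ i, ∑ s ∈ Icc 1 r, (2 - 2 * Real.cos (2 * π * θ i * s / k i)) : ℝ) : ℂ) •
        fun x => Complex.exp (2 * π * I * ∑ i, (θ i : ℂ) * ((x i).val : ℂ) / (k i : ℂ)) := by
  have hprod : (fun x : (i : Fin m) → ZMod (k i) =>
      Complex.exp (2 * π * I * ∑ i, (θ i : ℂ) * ((x i).val : ℂ) / (k i : ℂ))) =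
      fun x => ∏ i, ZMod.stdAddChar.mulShift (θ i : ZMod (k i)) (x i) := by
    funext x
    rw [mul_sum, Complex.exp_sum]
    refine prod_congr rfl fun i _ => ?_
    rw [AddChar.mulShift_apply, show (θ i : ZMod (k i)) * x i = (((θ i * (x i).val : ℕ) : ℤ) :
      ZMod (k i)) by simp, ZMod.stdAddChar_coe]
    push_cast
    ring_nf
  rw [hprod, nnTorus_lapMatrix_mulVec_prod _ _
    fun i => nnCycle_lapMatrix_mulVec_addChar (hk i) _]
  simp only [two_sub_stdAddChar_mulShift, ← Complex.ofReal_sum]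

theorem nnTorus_lapMatrix_mulVec_exp_coord (hr : 1 ≤ r) (hk : ∀ i, 2 * r + 1 ≤ k i)
    (i : Fin m) :
    (nnTorus m r k).lapMatrix ℂ *ᵥ
        (fun x => Complex.exp (2 * π * I * (x i).val / k i)) =
      ((2 * r + 1 - Real.sin ((2 * r + 1) * π / k i) / Real.sin (π / k i) : ℝ) : ℂ) •
        fun x => Complex.exp (2 * π * I * (x i).val / k i) := by
  have hk1 : (1 : ℝ) < k i := by exact_mod_cast (by have := hk i; omega : 1 < k i)
  have hsin : Real.sin (π / k i) ≠ 0 :=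
    (Real.sin_pos_of_pos_of_lt_pi (by positivity) (div_lt_self pi_pos hk1)).ne'
  have hv : (fun x : (j : Fin m) → ZMod (k j) => Complex.exp (2 * π * I * (x i).val / k i)) =
      fun x => Complex.exp (2 * π * I *
        ∑ j, ((Pi.single i 1 : Fin m → ℕ) j : ℂ) * ((x j).val : ℂ) / (k j : ℂ)) := by
    funext x
    rw [sum_eq_single i (fun j _ hj => by simp [hj]) (by simp)]
    simp [mul_div_assoc]
  have hμ : ∑ j, ∑ s ∈ Icc 1 r,
      (2 - 2 * Real.cos (2 * π * (Pi.single i 1 : Fin m → ℕ) j * s / k j)) =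
      2 * r + 1 - Real.sin ((2 * r + 1) * π / k i) / Real.sin (π / k i) := by
    rw [sum_eq_single i (fun j _ hj => by simp [hj]) (by simp),
      Pi.single_eq_same, sum_Icc_two_sub_two_cos_of_eq r 1 (k i) (by simp) hsin, mul_div_assoc]
  rw [hv, nnTorus_lapMatrix_mulVec_exp_sum hk, hμ]

theorem nnTorus_lapMatrix_mulVec_exp_antipodal (hr : 1 ≤ r) (hko : ∀ i, Odd (k i))
    (hk : ∀ i, 2 * r + 1 ≤ k i) :
    (nnTorus m r k).lapMatrix ℂ *ᵥ
        (fun x => Complex.exp (2 * π * I *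
          ∑ i, (((k i - 1) / 2 : ℕ) : ℂ) * ((x i).val : ℂ) / (k i : ℂ))) =
      (((2 * r + 1) * m - ∑ i, Real.sin ((2 * r + 1) * π * ((k i : ℝ) - 1) / (2 * k i)) /
          Real.sin (π * ((k i : ℝ) - 1) / (2 * k i)) : ℝ) : ℂ) •
        fun x => Complex.exp (2 * π * I *
          ∑ i, (((k i - 1) / 2 : ℕ) : ℂ) * ((x i).val : ℂ) / (k i : ℂ)) := by
  have hμ : ∀ i, ∑ s ∈ Icc 1 r, (2 - 2 * Real.cos (2 * π * ((k i - 1) / 2 : ℕ) * s / k i)) =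
      2 * r + 1 - Real.sin ((2 * r + 1) * π * ((k i : ℝ) - 1) / (2 * k i)) /
        Real.sin (π * ((k i : ℝ) - 1) / (2 * k i)) := fun i => by
    obtain ⟨j, hj⟩ := hko i
    have hj0 : (0 : ℝ) < j := by exact_mod_cast (by have := hk i; omega : 0 < j)
    have hkj : (k i : ℝ) = 2 * j + 1 := by rw [hj]; push_cast; rfl
    have hβ : π * ((k i : ℝ) - 1) / (2 * k i) = π * j / (2 * j + 1) := by
      rw [hkj]
      field_simp
      ring
    have hsin : Real.sin (π * ((k i : ℝ) - 1) / (2 * k i)) ≠ 0 := by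
      rw [hβ]
      refine (Real.sin_pos_of_pos_of_lt_pi (by positivity) ?_).ne'
      rw [div_lt_iff₀ (by positivity)]
      nlinarith [pi_pos]
    have hθ : (((k i - 1) / 2 : ℕ) : ℝ) = j := by exact_mod_cast (by omega : (k i - 1) / 2 = j)
    rw [sum_Icc_two_sub_two_cos_of_eq r _ _ (by rw [hθ, hβ, hkj]) hsin,
      mul_div_assoc, mul_div_assoc, mul_assoc]
  rw [nnTorus_lapMatrix_mulVec_exp_sum hk, sum_congr rfl fun i _ => hμ i, sum_sub_distrib,
    sum_const, card_univ, Fintype.card_fin, nsmul_eq_mul]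
  push_cast
  ring_nf

end Torus

/-- For `m, r ≥ 1` and odd `k i` with `2r+1 ≤ k i`: in the `m`-dimensional `r`-nearest
neighbor torus, `λ_{1,0,…,0} = 2r+1 - sin((2r+1)π/k₁)/sin(π/k₁)` is an eigenvalue of the
Laplacian (eigenvector `v(x) = exp(2πix₁/k₁)`),
`λ_{(k₁-1)/2,…,(k_m-1)/2} = (2r+1)m - ∑ᵢ sin((2r+1)π(kᵢ-1)/(2kᵢ))/sin(π(kᵢ-1)/(2kᵢ))` is an
eigenvalue (eigenvector `v(x) = exp(2πi·∑ᵢ ((kᵢ-1)/2)xᵢ/kᵢ)`), and their quotient equals the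
stated expression. -/
theorem multitorus_synchronizability_odd (m r : ℕ) (hm : 1 ≤ m) (hr : 1 ≤ r)
    (k : Fin m → ℕ) (hko : ∀ i, Odd (k i)) (hk : ∀ i, 2 * r + 1 ≤ k i) :
    haveI : ∀ i, NeZero (k i) := fun i => ⟨by have := hk i; omega⟩
    ((nnTorus m r k).lapMatrix ℂ *ᵥ
        (fun x => Complex.exp (2 * Real.pi * Complex.I * (x ⟨0, hm⟩).val / k ⟨0, hm⟩)) =
      ((2 * r + 1 - Real.sin ((2 * r + 1) * Real.pi / k ⟨0, hm⟩) /
          Real.sin (Real.pi / k ⟨0, hm⟩) : ℝ) : ℂ) •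
        (fun x => Complex.exp (2 * Real.pi * Complex.I * (x ⟨0, hm⟩).val / k ⟨0, hm⟩))) ∧
    ((nnTorus m r k).lapMatrix ℂ *ᵥ
        (fun x => Complex.exp (2 * Real.pi * Complex.I *
          ∑ i, (((k i - 1) / 2 : ℕ) : ℂ) * ((x i).val : ℂ) / (k i : ℂ))) =
      (((2 * r + 1) * m - ∑ i, Real.sin ((2 * r + 1) * Real.pi * ((k i : ℝ) - 1) / (2 * k i)) /
          Real.sin (Real.pi * ((k i : ℝ) - 1) / (2 * k i)) : ℝ) : ℂ) •
        (fun x => Complex.exp (2 * Real.pi * Complex.I *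
          ∑ i, (((k i - 1) / 2 : ℕ) : ℂ) * ((x i).val : ℂ) / (k i : ℂ)))) ∧
    (2 * (r : ℝ) + 1 - Real.sin ((2 * r + 1) * Real.pi / k ⟨0, hm⟩) /
        Real.sin (Real.pi / k ⟨0, hm⟩)) /
      ((2 * r + 1) * m - ∑ i, Real.sin ((2 * r + 1) * Real.pi * ((k i : ℝ) - 1) / (2 * k i)) /
          Real.sin (Real.pi * ((k i : ℝ) - 1) / (2 * k i))) =
      (2 * r + 1 - Real.sin ((2 * r + 1) * Real.pi / k ⟨0, hm⟩) /
        Real.sin (Real.pi / k ⟨0, hm⟩)) /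
      ((2 * r + 1) * m - ∑ i, Real.sin ((2 * r + 1) * Real.pi * ((k i : ℝ) - 1) / (2 * k i)) /
          Real.sin (Real.pi * ((k i : ℝ) - 1) / (2 * k i))) := by
  have : ∀ i, NeZero (k i) := fun i => ⟨by have := hk i; omega⟩
  exact ⟨nnTorus_lapMatrix_mulVec_exp_coord hr hk _,
    nnTorus_lapMatrix_mulVec_exp_antipodal hr hko hk, rfl⟩
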